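/- Let (P,≤,',0,1) be a finite strongly modular consistent poset. Define set-valued operators on P by x⊙y := {0} if x ≤ y' and x⊙y := Max L(U(x,y'),y) otherwise, and x→y := {1} if x ≤ y and x→y := Min U(x',L(x,y)) otherwise, where Max and Min denote the sets of maximal and minimal elements. Then for all x,y,z ∈ P: (i) x⊙1 = 1⊙x = {x}; (ii) every element of x⊙y is ≤ z if and only if x ≤ every element of y→z (adjointness). -/

import Mathlib

/-- `f` is an antitone involution on the poset `P`. -/
def AntitoneInvolution {P : Type*} [PartialOrder P] (f : P → P) : Prop :=
  (∀ x, f (f x) = x) ∧ ∀ x y : P, x ≤ y → f y ≤ f x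

/-- A consistent poset: a bounded poset with an antitone involution `f` satisfying
(8) `L(x,x') = L(y,y')` for all `x,y ∉ {0,1}` and (9) `L(x,y) ≠ {0}` for `x,y ≠ 0`. -/
def ConsistentPoset {P : Type*} [PartialOrder P] [BoundedOrder P] (f : P → P) : Prop :=
  AntitoneInvolution f ∧
  (∀ x y : P, x ≠ ⊥ → x ≠ ⊤ → y ≠ ⊥ → y ≠ ⊤ →
    lowerBounds {x, f x} = lowerBounds {y, f y}) ∧
  (∀ x y : P, x ≠ ⊥ → y ≠ ⊥ → lowerBounds {x, y} ≠ ({⊥} : Set P))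

/-- A poset is strongly modular if it satisfies the identities
(2) `L(U(x,y),U(x,z)) = L(U(x, L(y,U(x,z))))` and
(3) `L(U(L(x,z),y),z) = L(U(L(x,z), L(y,z)))`. -/
def StronglyModularPoset (P : Type*) [PartialOrder P] : Prop :=
  (∀ x y z : P,
    lowerBounds (upperBounds {x, y} ∪ upperBounds {x, z}) =
      lowerBounds (upperBounds ({x} ∪ lowerBounds ({y} ∪ upperBounds {x, z})))) ∧
  (∀ x y z : P,
    lowerBounds (upperBounds (lowerBounds {x, z} ∪ {y}) ∪ {z}) =
      lowerBounds (upperBounds (lowerBounds {x, z} ∪ lowerBounds {y, z})))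

/-- The set of maximal elements of `s`. -/
def maxSet {P : Type*} [PartialOrder P] (s : Set P) : Set P := {x | Maximal (· ∈ s) x}

/-- The set of minimal elements of `s`. -/
def minSet {P : Type*} [PartialOrder P] (s : Set P) : Set P := {x | Minimal (· ∈ s) x}

open Classical in
/-- The operator `x ⊙ y` of (14). -/
noncomputable def odot {P : Type*} [PartialOrder P] [BoundedOrder P] (f : P → P)
    (x y : P) : Set P :=
  if x ≤ f y then {⊥} else maxSet (lowerBounds (upperBounds {x, f y} ∪ {y}))

open Classical in
/-- The operator `x → y` of (14). -/
noncomputable def arrow {P : Type*} [PartialOrder P] [BoundedOrder P] (f : P → P)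
    (x y : P) : Set P :=
  if x ≤ y then {⊤} else minSet (upperBounds ({f x} ∪ lowerBounds {x, y}))

/-!
Outside the degenerate cases `x ≤ y'` and `y ≤ z`, adjointness says that
`L(U(x,y'),y) ⊆ ↓z` iff `U(y',L(y,z)) ⊆ ↑x`; by finiteness the sets of maximal and minimal
elements may be replaced by the whole sets. Condition (8), together with the involution, makes
`L(y,y')` lie below every `z ≠ 0` and `U(y,y')` above every `x ≠ 1`. With this, the forward
direction is identity (2) applied to `x ∈ L(U(y',y),U(y',x))`, and the backward one is
identity (3) applied to `w ∈ L(U(L(z,y),y'),y)`.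
-/

open Set

section Extremal

variable {P : Type*} [PartialOrder P]

theorem upperBounds_maxSet [Finite P] (s : Set P) : upperBounds (maxSet s) = upperBounds s := by
  refine Subset.antisymm (fun z hz w hw => ?_) (upperBounds_mono_set fun _ hw => hw.1)
  obtain ⟨b, hwb, hb⟩ := Finite.exists_le_maximal hw
  exact hwb.trans (hz hb)

theorem lowerBounds_minSet [Finite P] (s : Set P) : lowerBounds (minSet s) = lowerBounds s := by
  refine Subset.antisymm (fun x hx w hw => ?_) (lowerBounds_mono_set fun _ hw => hw.1)
  obtain ⟨b, hbw, hb⟩ := Finite.exists_le_minimal hw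
  exact (hx hb).trans hbw

theorem maxSet_Iic (x : P) : maxSet (Iic x) = {x} :=
  Set.ext fun _ => maximal_le_iff

end Extremal

namespace AntitoneInvolution

variable {P : Type*} [PartialOrder P] {f : P → P}

theorem le_iff (hf : AntitoneInvolution f) {a b : P} : f a ≤ f b ↔ b ≤ a :=
  ⟨fun h => hf.1 a ▸ hf.1 b ▸ hf.2 _ _ h, hf.2 _ _⟩

theorem map_bot [BoundedOrder P] (hf : AntitoneInvolution f) : f ⊥ = ⊤ :=
  top_unique (hf.1 ⊤ ▸ hf.2 _ _ bot_le)

theorem map_top [BoundedOrder P] (hf : AntitoneInvolution f) : f ⊤ = ⊥ := by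
  rw [← hf.map_bot, hf.1]

end AntitoneInvolution

namespace ConsistentPoset

variable {P : Type*} [PartialOrder P] [BoundedOrder P] {f : P → P}

theorem le_of_mem_lowerBounds_pair (hf : ConsistentPoset f) {y z w : P} (hz : z ≠ ⊥)
    (hw : w ∈ lowerBounds {y, f y}) : w ≤ z := by
  have hw' : w ≤ y ∧ w ≤ f y := ⟨hw (mem_insert _ _), hw (mem_insert_of_mem _ rfl)⟩
  rcases eq_or_ne y ⊥ with rfl | hy0
  · exact hw'.1.trans bot_le
  rcases eq_or_ne y ⊤ with rfl | hy1
  · exact (hf.1.map_top ▸ hw'.2).trans bot_le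
  rcases eq_or_ne z ⊤ with rfl | hz1
  · exact le_top
  rw [hf.2.1 y z hy0 hy1 hz hz1] at hw
  exact hw (mem_insert _ _)

theorem le_of_mem_upperBounds_pair (hf : ConsistentPoset f) {x y v : P} (hx : x ≠ ⊤)
    (hv : v ∈ upperBounds {y, f y}) : x ≤ v := by
  have hfx : f x ≠ ⊥ := fun h => hx (by rw [← hf.1.1 x, h, hf.1.map_bot])
  refine hf.1.le_iff.1 (hf.le_of_mem_lowerBounds_pair hfx (y := y) ?_)
  rintro a (rfl | rfl)
  · exact (hf.1.2 _ _ (hv (mem_insert_of_mem _ rfl))).trans_eq (hf.1.1 a)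
  · exact hf.1.2 _ _ (hv (mem_insert _ _))

end ConsistentPoset

section Operators

variable {P : Type*} [PartialOrder P] [BoundedOrder P] {f : P → P}

theorem odot_top (hf : AntitoneInvolution f) (x : P) : odot f x ⊤ = {x} := by
  by_cases hx : x ≤ f ⊤
  · rw [odot, if_pos hx, le_bot_iff.1 (hx.trans_eq hf.map_top)]
  · rw [odot, if_neg hx]
    convert maxSet_Iic x using 2
    refine Subset.antisymm (fun w hw => hw (mem_union_left _ (by simp [hf.map_top]))) ?_
    rintro w hw a (ha | rfl)
    · exact hw.trans (ha (mem_insert _ _))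
    · exact le_top

theorem top_odot (hf : AntitoneInvolution f) (x : P) : odot f ⊤ x = {x} := by
  by_cases hx : ⊤ ≤ f x
  · rw [odot, if_pos hx, ← hf.1 x, top_unique hx, hf.map_top]
  · rw [odot, if_neg hx]
    convert maxSet_Iic x using 2
    refine Subset.antisymm (fun w hw => hw (mem_union_right _ rfl)) ?_
    rintro w hw a (ha | rfl)
    · exact le_top.trans (ha (mem_insert _ _))
    · exact hw

theorem odot_subset_Iic (x y : P) : odot f x y ⊆ Iic y := by
  unfold odot
  split_ifs
  · simp
  · exact fun w hw => hw.1 (mem_union_right _ rfl)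

theorem arrow_subset_Ici (x y : P) : arrow f x y ⊆ Ici (f x) := by
  unfold arrow
  split_ifs
  · simp
  · exact fun w hw => hw.1 (mem_union_left _ rfl)

theorem StronglyModularPoset.le_arrow_of_odot_le (hsmod : StronglyModularPoset P)
    (hf : ConsistentPoset f) {x y z : P} (hyz : ¬y ≤ z)
    (h : z ∈ upperBounds (lowerBounds (upperBounds {x, f y} ∪ {y}))) :
    x ∈ lowerBounds (upperBounds ({f y} ∪ lowerBounds {y, z})) := by
  have hx : x ≠ ⊤ := by
    rintro rfl
    refine hyz (h ?_)
    rintro a (ha | rfl)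
    · exact le_top.trans (ha (mem_insert _ _))
    · exact le_rfl
  have hxL : x ∈ lowerBounds (upperBounds {f y, y} ∪ upperBounds {f y, x}) := by
    rintro a (ha | ha)
    · exact hf.le_of_mem_upperBounds_pair hx (pair_comm y (f y) ▸ ha)
    · exact ha (mem_insert_of_mem _ rfl)
  rw [hsmod.1] at hxL
  intro u hu
  refine hxL ?_
  rintro a (rfl | ha)
  · exact hu (mem_union_left _ rfl)
  · have hay : a ≤ y := ha (mem_union_left _ rfl)
    have haz : a ≤ z := by
      refine h ?_
      rintro b (hb | rfl)
      · exact ha (mem_union_right _ (pair_comm x (f y) ▸ hb))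
      · exact hay
    refine hu (mem_union_right _ ?_)
    rintro b (rfl | rfl)
    · exact hay
    · exact haz

theorem StronglyModularPoset.odot_le_of_le_arrow (hsmod : StronglyModularPoset P)
    (hf : ConsistentPoset f) {x y z : P} (hxy : ¬x ≤ f y)
    (h : x ∈ lowerBounds (upperBounds ({f y} ∪ lowerBounds {y, z}))) :
    z ∈ upperBounds (lowerBounds (upperBounds {x, f y} ∪ {y})) := by
  have hz : z ≠ ⊥ := by
    rintro rfl
    refine hxy (h ?_)
    rintro a (rfl | ha)
    · exact le_rfl
    · exact (ha (mem_insert_of_mem _ rfl)).trans bot_le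
  intro w hw
  have hw' : w ∈ lowerBounds (upperBounds (lowerBounds {z, y} ∪ {f y}) ∪ {y}) := by
    rintro a (ha | rfl)
    · refine hw (mem_union_left _ ?_)
      rintro b (rfl | rfl)
      · exact h (by rwa [union_comm, pair_comm])
      · exact ha (mem_union_right _ rfl)
    · exact hw (mem_union_right _ rfl)
  rw [hsmod.2] at hw'
  refine hw' ?_
  rintro a (ha | ha)
  · exact ha (mem_insert _ _)
  · exact hf.le_of_mem_lowerBounds_pair hz (pair_comm (f y) y ▸ ha)

end Operators

theorem stmt_12 {P : Type*} [PartialOrder P] [BoundedOrder P] [Finite P] (f : P → P)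
    (hcons : ConsistentPoset f) (hsmod : StronglyModularPoset P) :
    ∀ x y z : P,
      odot f x ⊤ = {x} ∧ odot f ⊤ x = {x} ∧
      ((∀ w ∈ odot f x y, w ≤ z) ↔ (∀ w ∈ arrow f y z, x ≤ w)) := by
  intro x y z
  refine ⟨odot_top hcons.1 x, top_odot hcons.1 x, ?_⟩
  change z ∈ upperBounds _ ↔ x ∈ lowerBounds _
  by_cases hxy : x ≤ f y
  · rw [odot, if_pos hxy]
    exact iff_of_true (by simp) fun w hw => hxy.trans (arrow_subset_Ici y z hw)
  by_cases hyz : y ≤ z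
  · rw [arrow, if_pos hyz]
    exact iff_of_true (fun w hw => (odot_subset_Iic x y hw).trans hyz) (by simp)
  rw [odot, if_neg hxy, arrow, if_neg hyz, upperBounds_maxSet, lowerBounds_minSet]
  exact ⟨hsmod.le_arrow_of_odot_le hcons hyz, hsmod.odot_le_of_le_arrow hcons hxy⟩
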